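/- Telescoping of partition functions: the average of ∏_{j=1}^{L} ∏_{i=1}^{N}(μ_j − xᵢ) with respect to the weight Δ(x)²dα(x)/Z_N equals the product ∏_{j=0}^{L−1} π_N^{[j]}(μ_{j+1}), where π_N^{[j]} is the N-th monic orthogonal polynomial with respect to the measure ∏_{k=1}^{j}(μ_k − t) dα(t). -/

import Mathlib

/-!
Every monic family `π_k` with `deg π_k = k` gives `Vand x = det [π_k (x_i)]`, and Andreief's
identity turns the `N`-fold integral of a product of two such determinants into `N!` times the
determinant of a matrix of one-dimensional integrals. Expanding
`∏ᵢ (a - xᵢ) · Vand x = Vand (x, a)` along the row of `a`, orthogonality of the `π_k` for the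
weight `v` kills every minor except the one omitting `π_N`, so
`∫ ∏ᵢ (a - xᵢ) ∏ᵢ v(xᵢ) Vand² = π_N(a) ∫ ∏ᵢ v(xᵢ) Vand²`.
With `a = μ_j` and `v(t) = ∏_{k<j} (μ_k - t)` this peels off the factors one at a time, and
`Z > 0` because `Z = N! · det` of the positive definite moment matrix of `α`.
-/

open MeasureTheory Polynomial Finset

/-- The Vandermonde product `∏_{i>j} (x i - x j)`. -/
noncomputable def Vand {n : ℕ} (x : Fin n → ℝ) : ℝ :=
  ∏ i : Fin n, ∏ j ∈ Finset.Iio i, (x i - x j)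

open Matrix Equiv

theorem Matrix.det_eq_sum_sign_mul_prod {n R : Type*} [Fintype n] [DecidableEq n] [CommRing R]
    (M : Matrix n n R) : M.det = ∑ σ : Perm n, (Perm.sign σ : R) * ∏ i, M i (σ i) := by
  rw [← det_transpose, det_apply']
  rfl

theorem det_mul_det_eq_sum_perm {E R : Type*} [CommRing R] {N : ℕ} (f g : Fin N → E → R)
    (x : Fin N → E) :
    det (of fun i k => f k (x i)) * det (of fun i k => g k (x i)) =
      ∑ σ : Perm (Fin N), ∑ τ : Perm (Fin N), (Perm.sign σ * Perm.sign τ : R) *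
        ∏ i, f (σ i) (x i) * g (τ i) (x i) := by
  simp only [det_eq_sum_sign_mul_prod, of_apply, sum_mul_sum, prod_mul_distrib]
  exact sum_congr rfl fun σ _ => sum_congr rfl fun τ _ => by ring

section Andreief

variable {E : Type*} [MeasurableSpace E] {β : Measure E} [SigmaFinite β] {N : ℕ}

theorem integrable_det_mul_det {f g : Fin N → E → ℝ}
    (hfg : ∀ j k, Integrable (fun t => f j t * g k t) β) :
    Integrable (fun x : Fin N → E => det (of fun i k => f k (x i)) * det (of fun i k => g k (x i)))
      (Measure.pi fun _ => β) := by
  simp only [det_mul_det_eq_sum_perm]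
  exact integrable_finsetSum _ fun σ _ => integrable_finsetSum _ fun τ _ =>
    (Integrable.fintype_prod fun i => hfg (σ i) (τ i)).const_mul _

/-- Andreief's identity. -/
theorem integral_det_mul_det {f g : Fin N → E → ℝ}
    (hfg : ∀ j k, Integrable (fun t => f j t * g k t) β) :
    ∫ x : Fin N → E, det (of fun i k => f k (x i)) * det (of fun i k => g k (x i))
        ∂(Measure.pi fun _ => β) =
      N.factorial * det (of fun j k => ∫ t, f j t * g k t ∂β) := by
  set M : Matrix (Fin N) (Fin N) ℝ := of fun j k => ∫ t, f j t * g k t ∂β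
  have hrow : ∀ σ : Perm (Fin N),
      ∑ τ : Perm (Fin N), (Perm.sign τ : ℝ) * ∏ i, M (σ i) (τ i) = Perm.sign σ * M.det := by
    intro σ
    rw [← det_permute, det_eq_sum_sign_mul_prod]
    rfl
  simp only [det_mul_det_eq_sum_perm]
  rw [integral_finsetSum _ fun σ _ => integrable_finsetSum _ fun τ _ =>
    (Integrable.fintype_prod fun i => hfg (σ i) (τ i)).const_mul _]
  calc ∑ σ : Perm (Fin N), ∫ x : Fin N → E, ∑ τ : Perm (Fin N), (Perm.sign σ * Perm.sign τ : ℝ) *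
          ∏ i, f (σ i) (x i) * g (τ i) (x i) ∂(Measure.pi fun _ => β)
      = ∑ σ : Perm (Fin N), ∑ τ : Perm (Fin N), (Perm.sign σ * Perm.sign τ : ℝ) *
          ∏ i, M (σ i) (τ i) := by
        refine sum_congr rfl fun σ _ => ?_
        rw [integral_finsetSum _ fun τ _ =>
          (Integrable.fintype_prod fun i => hfg (σ i) (τ i)).const_mul _]
        refine sum_congr rfl fun τ _ => ?_
        rw [integral_const_mul, integral_fintype_prod_eq_prod fun i t => f (σ i) t * g (τ i) t]
        rfl
    _ = ∑ _σ : Perm (Fin N), M.det := by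
        refine sum_congr rfl fun σ _ => ?_
        simp_rw [mul_assoc, ← mul_sum, hrow, ← mul_assoc, ← Int.cast_mul, ← Units.val_mul,
          Int.units_mul_self, Units.val_one, Int.cast_one, one_mul]
    _ = N.factorial * M.det := by simp [Fintype.card_perm]

end Andreief

theorem dotProduct_mulVec_of_integral_mul {E n : Type*} [MeasurableSpace E] [Fintype n]
    {β : Measure E} {f : n → E → ℝ} (hf : ∀ j k, Integrable (fun t => f j t * f k t) β)
    (y : n → ℝ) :
    y ⬝ᵥ (of fun j k => ∫ t, f j t * f k t ∂β) *ᵥ y = ∫ t, (∑ k, y k * f k t) ^ 2 ∂β := by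
  have hsq : ∀ t, (∑ k, y k * f k t) ^ 2 = ∑ j, ∑ k, y j * y k * (f j t * f k t) := fun t => by
    rw [sq, sum_mul_sum]
    exact sum_congr rfl fun j _ => sum_congr rfl fun k _ => by ring
  simp only [hsq, dotProduct, mulVec, of_apply, mul_sum]
  rw [integral_finsetSum _ fun j _ => integrable_finsetSum _ fun k _ => (hf j k).const_mul _]
  refine sum_congr rfl fun j _ => ?_
  rw [integral_finsetSum _ fun k _ => (hf j k).const_mul _]
  refine sum_congr rfl fun k _ => ?_
  rw [integral_const_mul]
  ring

theorem vand_eq_det_vandermonde {n : ℕ} (x : Fin n → ℝ) : Vand x = (vandermonde x).det := by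
  rw [det_vandermonde, Vand, prod_comm' (t' := univ) (s' := fun j => Ioi j)]
  simp

theorem vand_eq_det_eval {n : ℕ} {p : Fin n → ℝ[X]} (hdeg : ∀ i, (p i).natDegree = i)
    (hmonic : ∀ i, (p i).Monic) (x : Fin n → ℝ) :
    Vand x = det (of fun i k => (p k).eval (x i)) := by
  rw [vand_eq_det_vandermonde, det_eval_matrixOfPolynomials_eq_det_vandermonde x p hdeg hmonic]

theorem vand_snoc {n : ℕ} (x : Fin n → ℝ) (a : ℝ) :
    Vand (Fin.snoc x a : Fin (n + 1) → ℝ) = (∏ i, (a - x i)) * Vand x := by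
  simp [Vand, Fin.prod_univ_castSucc, Fin.prod_Iio_castSucc, Fin.Iio_last_eq_map, mul_comm]

theorem prod_sub_mul_vand_eq_sum {N : ℕ} {π : ℕ → ℝ[X]} (hdeg : ∀ k, (π k).natDegree = k)
    (hmonic : ∀ k, (π k).Monic) (x : Fin N → ℝ) (a : ℝ) :
    (∏ i, (a - x i)) * Vand x = ∑ k : Fin (N + 1),
      (-1) ^ (N + k : ℕ) * (π k).eval a * det (of fun i j => (π (k.succAbove j)).eval (x i)) := by
  rw [← vand_snoc, vand_eq_det_eval (p := fun k : Fin (N + 1) => π k) (fun k => hdeg k)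
    (fun k => hmonic k), det_succ_row _ (Fin.last N)]
  simp only [Fin.succAbove_last, Fin.snoc_last, of_apply, Fin.val_last]
  refine sum_congr rfl fun k _ => ?_
  congr 2
  ext i j
  simp

theorem det_integral_succAbove_mul_eq_zero {E : Type*} [MeasurableSpace E] {β : Measure E}
    {φ ψ : ℕ → E → ℝ} (horth : ∀ k l, k ≠ l → ∫ t, φ k t * ψ l t ∂β = 0) {N : ℕ}
    {k : Fin (N + 1)} (hk : k ≠ Fin.last N) :
    det (of fun j l : Fin N => ∫ t, φ (k.succAbove j) t * ψ l t ∂β) = 0 := by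
  obtain ⟨j₀, hj₀⟩ := Fin.exists_succAbove_eq hk.symm
  exact det_eq_zero_of_row_eq_zero j₀ fun l => by simpa [hj₀] using horth N l l.isLt.ne'

theorem integral_prod_sub_mul_weight_mul_vand_sq {β : Measure ℝ} [SigmaFinite β] {v : ℝ → ℝ}
    {π : ℕ → ℝ[X]} (hdeg : ∀ k, (π k).natDegree = k) (hmonic : ∀ k, (π k).Monic)
    (hint : ∀ k l, Integrable (fun t => (π k).eval t * (π l).eval t * v t) β)
    (horth : ∀ k l, k ≠ l → ∫ t, (π k).eval t * (π l).eval t * v t ∂β = 0) (N : ℕ) (a : ℝ) :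
    ∫ x : Fin N → ℝ, (∏ i, (a - x i)) * (∏ i, v (x i)) * Vand x ^ 2 ∂(Measure.pi fun _ => β) =
      (π N).eval a * ∫ x : Fin N → ℝ, (∏ i, v (x i)) * Vand x ^ 2 ∂(Measure.pi fun _ => β) := by
  set g : ℕ → ℝ → ℝ := fun l t => v t * (π l).eval t
  have hg : ∀ k l, (fun t => (π k).eval t * g l t) = fun t => (π k).eval t * (π l).eval t * v t :=
    fun k l => funext fun t => by ring
  have hint' : ∀ (p : Fin N → ℕ) (j l : Fin N), Integrable (fun t => (π (p j)).eval t * g l t) β :=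
    fun p j l => hg (p j) l ▸ hint (p j) l
  have horth' : ∀ k l, k ≠ l → ∫ t, (π k).eval t * g l t ∂β = 0 :=
    fun k l hkl => hg k l ▸ horth k l hkl
  have hVand : ∀ x : Fin N → ℝ, Vand x = det (of fun i k : Fin N => (π k).eval (x i)) :=
    vand_eq_det_eval (fun k => hdeg k) (fun k => hmonic k)
  have hweight : ∀ x : Fin N → ℝ,
      det (of fun i l : Fin N => g l (x i)) = (∏ i, v (x i)) * Vand x := fun x => by
    rw [hVand, ← det_mul_column]
    rfl
  have hrhs : ∫ x : Fin N → ℝ, (∏ i, v (x i)) * Vand x ^ 2 ∂(Measure.pi fun _ => β) =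
      N.factorial * det (of fun j l : Fin N => ∫ t, (π j).eval t * g l t ∂β) := by
    rw [← integral_det_mul_det (hint' fun j => j)]
    refine integral_congr_ae (ae_of_all _ fun x => ?_)
    simp only [hweight, ← hVand]
    ring
  calc ∫ x : Fin N → ℝ, (∏ i, (a - x i)) * (∏ i, v (x i)) * Vand x ^ 2 ∂(Measure.pi fun _ => β)
      = ∫ x : Fin N → ℝ, ∑ k : Fin (N + 1), (-1) ^ (N + k : ℕ) * (π k).eval a *
          (det (of fun i j => (π (k.succAbove j)).eval (x i)) *
            det (of fun i l : Fin N => g l (x i))) ∂(Measure.pi fun _ => β) := by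
        refine integral_congr_ae (ae_of_all _ fun x => ?_)
        simp only [hweight, ← mul_assoc, ← sum_mul, ← prod_sub_mul_vand_eq_sum hdeg hmonic]
        ring
    _ = ∑ k : Fin (N + 1), (-1) ^ (N + k : ℕ) * (π k).eval a * (N.factorial *
          det (of fun j l : Fin N => ∫ t, (π (k.succAbove j)).eval t * g l t ∂β)) := by
        rw [integral_finsetSum _ fun k _ => ?_]
        · refine sum_congr rfl fun k _ => ?_
          rw [integral_const_mul, integral_det_mul_det (hint' fun j => k.succAbove j)]
        · exact (integrable_det_mul_det (hint' fun j => k.succAbove j)).const_mul _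
    _ = (π N).eval a *
          (N.factorial * det (of fun j l : Fin N => ∫ t, (π j).eval t * g l t ∂β)) := by
        rw [sum_eq_single_of_mem (Fin.last N) (mem_univ _) fun k _ hk => by
          simp only [det_integral_succAbove_mul_eq_zero horth' hk, mul_zero]]
        simp [Fin.succAbove_last, ← two_mul]
    _ = _ := by rw [hrhs]

theorem integral_prod_prod_sub_mul_vand_sq {β : Measure ℝ} [SigmaFinite β]
    (hβ : ∀ p : ℝ[X], Integrable (fun t => p.eval t) β) (N : ℕ) {L : ℕ} (μ : Fin L → ℝ)
    (π : Fin L → ℕ → ℝ[X]) (hdeg : ∀ j k, (π j k).natDegree = k) (hmonic : ∀ j k, (π j k).Monic)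
    (horth : ∀ j k l, k ≠ l →
      ∫ t, (π j k).eval t * (π j l).eval t * ∏ m ∈ Iio j, (μ m - t) ∂β = 0) :
    ∫ x : Fin N → ℝ, (∏ j, ∏ i, (μ j - x i)) * Vand x ^ 2 ∂(Measure.pi fun _ => β) =
      (∏ j, (π j N).eval (μ j)) * ∫ x : Fin N → ℝ, Vand x ^ 2 ∂(Measure.pi fun _ => β) := by
  induction L with
  | zero => simp
  | succ L ih =>
    have hlast := integral_prod_sub_mul_weight_mul_vand_sq
      (v := fun t => ∏ m : Fin L, (μ m.castSucc - t)) (hdeg (Fin.last L)) (hmonic (Fin.last L))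
      (fun k l => by
        convert hβ (π (Fin.last L) k * π (Fin.last L) l * ∏ m : Fin L, (C (μ m.castSucc) - X))
          using 2
        simp [eval_prod])
      (fun k l hkl => by simpa [Fin.Iio_last_eq_map] using horth (Fin.last L) k l hkl) N
      (μ (Fin.last L))
    have hinit := ih (fun j => μ j.castSucc) (fun j => π j.castSucc) (fun j => hdeg _)
      (fun j => hmonic _) (fun j k l hkl => by
        simpa [Fin.prod_Iio_castSucc] using horth j.castSucc k l hkl)
    simp only [prod_comm (s := univ (α := Fin N))] at hlast
    rw [Fin.prod_univ_castSucc, mul_comm _ ((π (Fin.last L) N).eval _), mul_assoc, ← hinit,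
      ← hlast]
    refine integral_congr_ae (ae_of_all _ fun x => ?_)
    simp only [Fin.prod_univ_castSucc (n := L)]
    ring

theorem Continuous.integrable_of_measure_compl_eq_zero {X : Type*} [TopologicalSpace X]
    [T2Space X] [MeasurableSpace X] [OpensMeasurableSpace X] {β : Measure X}
    [IsFiniteMeasureOnCompacts β] {K : Set X} (hK : IsCompact K) (hβK : β Kᶜ = 0) {f : X → ℝ}
    (hf : Continuous f) : Integrable f β := by
  simpa [IntegrableOn, Measure.restrict_eq_self_of_ae_mem (mem_ae_iff.2 hβK)] using
    hf.continuousOn.integrableOn_compact (μ := β) hK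

theorem integral_withDensity_ofReal_eq_integral_mul {E : Type*} [MeasurableSpace E]
    {β : Measure E} {w : E → ℝ} (hw : Measurable w) (hw₀ : ∀ᵐ t ∂β, 0 ≤ w t) (g : E → ℝ) :
    ∫ t, g t ∂β.withDensity (fun t => ENNReal.ofReal (w t)) = ∫ t, w t * g t ∂β := by
  rw [integral_withDensity_eq_integral_toReal_smul hw.ennreal_ofReal
    (ae_of_all _ fun _ => ENNReal.ofReal_lt_top)]
  exact integral_congr_ae (hw₀.mono fun t ht => by simp [ENNReal.toReal_ofReal ht])

theorem posDef_moment_matrix {β : Measure ℝ} (hβ : ∀ p : ℝ[X], Integrable (fun t => p.eval t) β)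
    (hpos : ∀ p : ℝ[X], p ≠ 0 → 0 < ∫ t, (p.eval t) ^ 2 ∂β) (N : ℕ) :
    (of fun j k : Fin N => ∫ t, t ^ (j : ℕ) * t ^ (k : ℕ) ∂β).PosDef := by
  classical
  refine PosDef.of_dotProduct_mulVec_pos (IsHermitian.ext fun j k => ?_) fun y hy => ?_
  · simp [mul_comm]
  · rw [star_trivial, dotProduct_mulVec_of_integral_mul fun j k => by
      convert hβ (X ^ (j : ℕ) * X ^ (k : ℕ)) using 2
      simp]
    have hp : ofFn N y ≠ 0 := by simpa using (injective_ofFn N).ne hy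
    simpa [ofFn_eq_sum_monomial, eval_finsetSum] using hpos _ hp

theorem integral_vand_sq_pos {β : Measure ℝ} [SigmaFinite β]
    (hβ : ∀ p : ℝ[X], Integrable (fun t => p.eval t) β)
    (hpos : ∀ p : ℝ[X], p ≠ 0 → 0 < ∫ t, (p.eval t) ^ 2 ∂β) (N : ℕ) :
    0 < ∫ x : Fin N → ℝ, Vand x ^ 2 ∂(Measure.pi fun _ => β) := by
  have hVand := vand_eq_det_eval (p := fun k : Fin N => X ^ (k : ℕ)) (by simp) (by simp)
  have hmom : ∀ j k : Fin N, Integrable (fun t => (X ^ (j : ℕ) : ℝ[X]).eval t *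
      (X ^ (k : ℕ) : ℝ[X]).eval t) β := fun j k => by
    convert hβ (X ^ (j : ℕ) * X ^ (k : ℕ)) using 2
    rw [eval_mul]
  simp_rw [sq, hVand, integral_det_mul_det hmom]
  simpa using mul_pos (Nat.cast_pos.2 N.factorial_pos) (posDef_moment_matrix hβ hpos N).det_pos

theorem average_product_eq_telescoping_product_general (α : Measure ℝ) [IsFiniteMeasure α] (Q : ℝ)
    (hQ : α (Set.Icc (-Q) Q)ᶜ = 0)
    (hposdef : ∀ p : Polynomial ℝ, p ≠ 0 → 0 < ∫ t, (p.eval t) ^ 2 ∂α)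
    (L N : ℕ) (μ : Fin L → ℝ) (hμQ : ∀ i, Q < μ i)
    -- the modified measures dα^{[j]}(t) = ∏_{k<j} (μ_k - t) dα(t)
    (αm : Fin L → Measure ℝ)
    (hαm : ∀ j, αm j = α.withDensity
      (fun t => ENNReal.ofReal (∏ k ∈ Finset.Iio j, (μ k - t))))
    -- πm j is the system of monic orthogonal polynomials for dα^{[j]}
    (πm : Fin L → ℕ → Polynomial ℝ)
    (hmonic : ∀ j k, (πm j k).Monic) (hdeg : ∀ j k, (πm j k).natDegree = k)
    (horth : ∀ j, ∀ k l, k ≠ l →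
      ∫ t, (πm j k).eval t * (πm j l).eval t ∂(αm j) = 0)
    (Z : ℝ)
    (hZ : Z = ∫ x : Fin N → ℝ, (Vand x) ^ 2 ∂(Measure.pi fun _ => α)) :
    (1 / Z) * ∫ x : Fin N → ℝ, (∏ j : Fin L, ∏ i, (μ j - x i)) * (Vand x) ^ 2
        ∂(Measure.pi fun _ => α)
      = ∏ j : Fin L, (πm j N).eval (μ j) := by
  have hα : ∀ p : ℝ[X], Integrable (fun t => p.eval t) α := fun p =>
    p.continuous.integrable_of_measure_compl_eq_zero isCompact_Icc hQ
  have hsupp : ∀ᵐ t ∂α, t ∈ Set.Icc (-Q) Q := mem_ae_iff.2 hQ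
  have horth' : ∀ j k l, k ≠ l →
      ∫ t, (πm j k).eval t * (πm j l).eval t * ∏ m ∈ Iio j, (μ m - t) ∂α = 0 := by
    intro j k l hkl
    have hweight : ∀ᵐ t ∂α, 0 ≤ ∏ m ∈ Iio j, (μ m - t) :=
      hsupp.mono fun t ht => prod_nonneg fun m _ => by linarith [hμQ m, ht.2]
    rw [← horth j k l hkl, hαm, integral_withDensity_ofReal_eq_integral_mul (by fun_prop) hweight]
    exact integral_congr_ae (ae_of_all _ fun t => mul_comm _ _)
  have hZpos : 0 < Z := hZ ▸ integral_vand_sq_pos hα hposdef N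
  rw [integral_prod_prod_sub_mul_vand_sq hα N μ πm hdeg hmonic horth', ← hZ, one_div,
    mul_comm, mul_inv_cancel_right₀ hZpos.ne']

/-- Telescoping of partition functions: the average of `∏_j ∏_i (μ_j - x_i)` equals the
product `∏_j π_N^{[j]}(μ_{j+1})` of monic orthogonal polynomials with respect to the
successively modified measures. -/
theorem average_product_eq_telescoping_product (α : Measure ℝ) [IsFiniteMeasure α] (Q : ℝ)
    (hQ : α (Set.Icc (-Q) Q)ᶜ = 0)
    (hposdef : ∀ p : Polynomial ℝ, p ≠ 0 → 0 < ∫ t, (p.eval t) ^ 2 ∂α)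
    (L N : ℕ) (μ : Fin L → ℝ) (hμ : Function.Injective μ) (hμQ : ∀ i, Q < μ i)
    -- the modified measures dα^{[j]}(t) = ∏_{k<j} (μ_k - t) dα(t)
    (αm : Fin L → Measure ℝ)
    (hαm : ∀ j, αm j = α.withDensity
      (fun t => ENNReal.ofReal (∏ k ∈ Finset.Iio j, (μ k - t))))
    -- πm j is the system of monic orthogonal polynomials for dα^{[j]}
    (πm : Fin L → ℕ → Polynomial ℝ)
    (hmonic : ∀ j k, (πm j k).Monic) (hdeg : ∀ j k, (πm j k).natDegree = k)
    (horth : ∀ j, ∀ k l, k ≠ l →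
      ∫ t, (πm j k).eval t * (πm j l).eval t ∂(αm j) = 0)
    (Z : ℝ)
    (hZ : Z = ∫ x : Fin N → ℝ, (Vand x) ^ 2 ∂(Measure.pi fun _ => α)) :
    (1 / Z) * ∫ x : Fin N → ℝ, (∏ j : Fin L, ∏ i, (μ j - x i)) * (Vand x) ^ 2
        ∂(Measure.pi fun _ => α)
      = ∏ j : Fin L, (πm j N).eval (μ j) :=
  average_product_eq_telescoping_product_general α Q hQ hposdef L N μ hμQ αm hαm πm hmonic hdeg
    horth Z hZ
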